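/- arXiv:2411.07937 — 2 statements merged into one kernel-verified Lean document; each statement's English description precedes it below -/
import Mathlib

section
/- Let F : Ω → H be a Bessel mapping with bound B, θ its transform operator, T = θ* its pre-frame operator, and K ∈ B(H). The following are equivalent: (1) F is a continuous K-frame, i.e. there exists A > 0 with A·‖K* u‖² ≤ ∫_Ω |⟪F ω, u⟫|² dμ(ω) for all u ∈ H; (2) range K ⊆ range T; (3) there exists a bounded linear operator X : H → L²(Ω, 𝕜) with K = T ∘ X (such an X is called a K-dual mapping to F). -/
/-!
Since `∫ |⟪F ω, u⟫|² dμ = ‖θ u‖²`, condition (1) says that `‖K* u‖ ≤ C ‖θ u‖` for some `C`, and the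
theorem is Douglas' factorization lemma for `θ`. Given such a majorization, `θ u ↦ K* u` is a
bounded map on the range of `θ`; hence for each `x` the functional `u ↦ ⟪K x, u⟫` factors boundedly
through `θ`, and Hahn–Banach plus Riesz produce `y` with `θ* y = K x`. Given `range K ⊆ range T`,
`X := (T|_{(ker T)ᗮ})⁻¹ ∘ K` is linear with a closed graph, hence bounded. Finally `K = T X` gives
`K* = X* θ`, so `‖K* u‖ ≤ ‖X‖ ‖θ u‖`.
-/

open MeasureTheory ContinuousLinearMap

theorem exists_pos_mul_sq_le_iff_exists_le_mul {ι : Type*} {a b : ι → ℝ}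
    (ha : ∀ i, 0 ≤ a i) (hb : ∀ i, 0 ≤ b i) :
    (∃ A, 0 < A ∧ ∀ i, A * a i ^ 2 ≤ b i ^ 2) ↔ ∃ C, ∀ i, a i ≤ C * b i := by
  constructor
  · rintro ⟨A, hA, hle⟩
    refine ⟨(√A)⁻¹, fun i => ?_⟩
    rw [inv_mul_eq_div, le_div_iff₀' (Real.sqrt_pos.mpr hA)]
    refine (pow_le_pow_iff_left₀ (mul_nonneg (Real.sqrt_nonneg A) (ha i)) (hb i) two_ne_zero).mp ?_
    rw [mul_pow, Real.sq_sqrt hA.le]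
    exact hle i
  · rintro ⟨C, hle⟩
    refine ⟨(C ^ 2 + 1)⁻¹, by positivity, fun i => ?_⟩
    rw [inv_mul_le_iff₀ (by positivity)]
    have := pow_le_pow_left₀ (ha i) (hle i) 2
    nlinarith [sq_nonneg (b i)]

theorem MeasureTheory.L2.norm_sq_eq_integral_norm_sq {𝕜 E Ω : Type*} [RCLike 𝕜]
    [NormedAddCommGroup E] [InnerProductSpace 𝕜 E] [MeasurableSpace Ω] {μ : Measure Ω}
    (f : Lp E 2 μ) : ‖f‖ ^ 2 = ∫ ω, ‖f ω‖ ^ 2 ∂μ := by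
  rw [← inner_self_eq_norm_sq (𝕜 := 𝕜), L2.inner_def, ← integral_re (L2.integrable_inner f f)]
  exact integral_congr_ae (.of_forall fun ω => inner_self_eq_norm_sq (f ω))

namespace ContinuousLinearMap

section Factorization

variable {𝕜 E F G : Type*} [RCLike 𝕜]
  [NormedAddCommGroup E] [NormedSpace 𝕜 E]
  [NormedAddCommGroup F] [NormedSpace 𝕜 F] [CompleteSpace F]
  [NormedAddCommGroup G] [InnerProductSpace 𝕜 G] [CompleteSpace G]

theorem exists_eq_comp_of_range_subset {T : G →L[𝕜] E} {K : F →L[𝕜] E}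
    (hrange : Set.range K ⊆ Set.range T) : ∃ X : F →L[𝕜] G, K = T.comp X := by
  set N := LinearMap.ker (T : G →ₗ[𝕜] E)
  let T₀ : Nᗮ →L[𝕜] E := T.comp Nᗮ.subtypeL
  have hT₀_inj : Function.Injective T₀ :=
    (injective_iff_map_eq_zero T₀).mpr fun w hw =>
      Subtype.ext (N.orthogonal_disjoint.le_bot ⟨hw, w.2⟩)
  have hT₀_range (u : F) : K u ∈ LinearMap.range (T₀ : Nᗮ →ₗ[𝕜] E) := by
    obtain ⟨w, hw⟩ := hrange ⟨u, rfl⟩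
    refine ⟨⟨w - N.starProjection w, N.sub_starProjection_mem_orthogonal w⟩, ?_⟩
    have : T (N.starProjection w) = 0 := N.starProjection_apply_mem w
    simp [T₀, this, hw]
  let X₀ : F →ₗ[𝕜] Nᗮ := (LinearEquiv.ofInjective _ hT₀_inj).symm.toLinearMap ∘ₗ
    (K : F →ₗ[𝕜] E).codRestrict _ hT₀_range
  have hX₀ (u : F) : T₀ (X₀ u) = K u :=
    congrArg Subtype.val ((LinearEquiv.ofInjective _ hT₀_inj).apply_symm_apply _)
  have hgraph : IsClosed (X₀.graph : Set (F × Nᗮ)) := by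
    have : (X₀.graph : Set (F × Nᗮ)) = {q | T₀ q.2 = K q.1} := Set.ext fun ⟨u, w⟩ =>
      ⟨fun (h : w = X₀ u) => h ▸ hX₀ u, fun h => hT₀_inj (h.trans (hX₀ u).symm)⟩
    rw [this]
    exact isClosed_eq (by fun_prop) (by fun_prop)
  exact ⟨Nᗮ.subtypeL.comp (ofIsClosedGraph hgraph), ext fun u => (hX₀ u).symm⟩

end Factorization

section Adjoint

variable {𝕜 E F G : Type*} [RCLike 𝕜]
  [NormedAddCommGroup E] [InnerProductSpace 𝕜 E] [CompleteSpace E]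
  [NormedAddCommGroup F] [InnerProductSpace 𝕜 F] [CompleteSpace F]
  [NormedAddCommGroup G] [InnerProductSpace 𝕜 G] [CompleteSpace G]

theorem norm_adjoint_apply_le_of_eq_comp {T : G →L[𝕜] E} {K : F →L[𝕜] E} {X : F →L[𝕜] G}
    (hKTX : K = T.comp X) (u : E) : ‖adjoint K u‖ ≤ ‖X‖ * ‖adjoint T u‖ := by
  rw [hKTX, adjoint_comp, comp_apply, ← LinearIsometryEquiv.norm_map adjoint X]
  exact le_opNorm _ _

theorem range_subset_range_adjoint_of_norm_le {θ : E →L[𝕜] G} {K : F →L[𝕜] E} {C : ℝ}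
    (hle : ∀ u, ‖adjoint K u‖ ≤ C * ‖θ u‖) : Set.range K ⊆ Set.range (adjoint θ) := by
  set θₗ := (θ : E →ₗ[𝕜] G)
  have hker : LinearMap.ker θₗ ≤ LinearMap.ker (adjoint K : E →ₗ[𝕜] F) := fun u (hu : θ u = 0) =>
    norm_le_zero_iff.mp (by simpa [hu] using hle u)
  let ψ : LinearMap.range θₗ →ₗ[𝕜] F :=
    (LinearMap.ker θₗ).liftQ _ hker ∘ₗ θₗ.quotKerEquivRange.symm.toLinearMap
  have hψ (u : E) : ψ ⟨θ u, LinearMap.mem_range_self θₗ u⟩ = adjoint K u :=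
    congrArg _ (θₗ.quotKerEquivRange_symm_apply_image u _)
  let ψc : LinearMap.range θₗ →L[𝕜] F := ψ.mkContinuous C fun ⟨_, u, hu⟩ => by
    subst hu; exact (hψ u).symm ▸ hle u
  rintro _ ⟨x, rfl⟩
  obtain ⟨g, hg, -⟩ := exists_extension_norm_eq _ ((innerSL 𝕜 x).comp ψc)
  refine ⟨(InnerProductSpace.toDual 𝕜 G).symm g, ext_inner_right 𝕜 fun u => ?_⟩
  rw [adjoint_inner_left, InnerProductSpace.toDual_symm_apply, ← adjoint_inner_right, ← hψ]
  exact hg ⟨θ u, LinearMap.mem_range_self θₗ u⟩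

end Adjoint

end ContinuousLinearMap

theorem continuous_K_frame_tfae_general
    {𝕜 : Type*} [RCLike 𝕜]
    {H : Type*} [NormedAddCommGroup H] [InnerProductSpace 𝕜 H] [CompleteSpace H]
    {Ω : Type*} [MeasurableSpace Ω] {μ : Measure Ω}
    (F : Ω → H)
    (θ : H →L[𝕜] Lp 𝕜 2 μ)
    (hθ : ∀ u : H, (θ u : Ω → 𝕜) =ᵐ[μ] fun ω => (inner 𝕜 (F ω) u : 𝕜))
    (K : H →L[𝕜] H) :
    List.TFAE [
      ∃ A : ℝ, 0 < A ∧ ∀ u : H,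
        A * ‖ContinuousLinearMap.adjoint K u‖ ^ 2 ≤ ∫ ω, ‖(inner 𝕜 (F ω) u : 𝕜)‖ ^ 2 ∂μ,
      Set.range ⇑K ⊆ Set.range ⇑(ContinuousLinearMap.adjoint θ),
      ∃ X : H →L[𝕜] Lp 𝕜 2 μ, K = (ContinuousLinearMap.adjoint θ).comp X ] := by
  have hnorm (u : H) : ∫ ω, ‖(inner 𝕜 (F ω) u : 𝕜)‖ ^ 2 ∂μ = ‖θ u‖ ^ 2 := by
    rw [L2.norm_sq_eq_integral_norm_sq (𝕜 := 𝕜)]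
    exact integral_congr_ae ((hθ u).mono fun ω hω => congrArg (‖·‖ ^ 2) hω.symm)
  have hframe : (∃ A : ℝ, 0 < A ∧ ∀ u : H,
        A * ‖adjoint K u‖ ^ 2 ≤ ∫ ω, ‖(inner 𝕜 (F ω) u : 𝕜)‖ ^ 2 ∂μ) ↔
      ∃ C, ∀ u, ‖adjoint K u‖ ≤ C * ‖θ u‖ := by
    simp only [hnorm]
    exact exists_pos_mul_sq_le_iff_exists_le_mul (fun _ => norm_nonneg _) fun _ => norm_nonneg _
  tfae_have 1 → 2 := fun h =>
    let ⟨_, hle⟩ := hframe.mp h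
    range_subset_range_adjoint_of_norm_le hle
  tfae_have 2 → 3 := exists_eq_comp_of_range_subset
  tfae_have 3 → 1 := fun ⟨X, hX⟩ =>
    hframe.mpr ⟨‖X‖, fun u => adjoint_adjoint θ ▸ norm_adjoint_apply_le_of_eq_comp hX u⟩
  tfae_finish

/-- Characterization of continuous `K`-frames: for a Bessel mapping `F` with transform
operator `θ` and pre-frame operator `T = θ*`, and `K ∈ B(H)`, the following are
equivalent: (1) `F` is a continuous `K`-frame; (2) `range K ⊆ range T`;
(3) there is `X ∈ B(H, L²(Ω, 𝕜))` with `K = T ∘ X` (a `K`-dual mapping to `F`). -/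
theorem continuous_K_frame_tfae
    {𝕜 : Type*} [RCLike 𝕜] [MeasurableSpace 𝕜] [BorelSpace 𝕜]
    {H : Type*} [NormedAddCommGroup H] [InnerProductSpace 𝕜 H] [CompleteSpace H]
    {Ω : Type*} [MeasurableSpace Ω] {μ : Measure Ω}
    (F : Ω → H) (B : ℝ) (hB : 0 < B)
    (hmeas : ∀ u : H, Measurable fun ω => (inner 𝕜 (F ω) u : 𝕜))
    (hbound : ∀ u : H, ∫ ω, ‖(inner 𝕜 (F ω) u : 𝕜)‖ ^ 2 ∂μ ≤ B * ‖u‖ ^ 2)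
    (θ : H →L[𝕜] Lp 𝕜 2 μ)
    (hθ : ∀ u : H, (θ u : Ω → 𝕜) =ᵐ[μ] fun ω => (inner 𝕜 (F ω) u : 𝕜))
    (K : H →L[𝕜] H) :
    List.TFAE [
      ∃ A : ℝ, 0 < A ∧ ∀ u : H,
        A * ‖ContinuousLinearMap.adjoint K u‖ ^ 2 ≤ ∫ ω, ‖(inner 𝕜 (F ω) u : 𝕜)‖ ^ 2 ∂μ,
      Set.range ⇑K ⊆ Set.range ⇑(ContinuousLinearMap.adjoint θ),
      ∃ X : H →L[𝕜] Lp 𝕜 2 μ, K = (ContinuousLinearMap.adjoint θ).comp X ] :=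
  continuous_K_frame_tfae_general F θ hθ K
end

section
/- Let (Ω, μ) be a measure space admitting a countable measurable partition {Ωₙ}ₙ∈ℕ of Ω with 0 < μ(Ωₙ) < ∞ for every n, let H₁, H₂ be Hilbert spaces over 𝕜 such that H₁ ⊕ H₂ has a Hilbert (orthonormal) basis indexed by ℕ, and let K₁ ∈ B(H₁), K₂ ∈ B(H₂). Then there exist maps F₁ : Ω → H₁ and F₂ : Ω → H₂ such that F₁ is a continuous K₁-frame for H₁, F₂ is a continuous K₂-frame for H₂, and F₁ ⊕ F₂ is a continuous (K₁ ⊕ K₂)-frame for H₁ ⊕ H₂ (each with some positive bounds). -/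
/-!
Let `T = K₁ ⊕ K₂`, let `(bₙ)` be the Hilbert basis of `H₁ ⊕ H₂`, and let `G` take the constant
value `μ(Ωₙ)^{-1/2} T bₙ` on `Ωₙ`. Then `∫ |⟪G ω, u⟫|² = ∑ₙ |⟪bₙ, T* u⟫|² = ‖T* u‖²` by Parseval,
so `G` is a continuous `T`-frame with bounds `1` and `max 1 ‖T‖²`. Since `T* = K₁* ⊕ K₂*`, testing
`G` against `(u₁, 0)` and `(0, u₂)` gives the same identity for its components and `K₁`, `K₂`.
-/

open MeasureTheory ContinuousLinearMap

/-- The direct sum operator `K₁ ⊕ K₂` on the super Hilbert space `H₁ ⊕ H₂`, mapping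
`(u, v)` to `(K₁ u, K₂ v)`. -/
noncomputable def prodOp {𝕜 : Type*} [RCLike 𝕜]
    {H₁ : Type*} [NormedAddCommGroup H₁] [InnerProductSpace 𝕜 H₁]
    {H₂ : Type*} [NormedAddCommGroup H₂] [InnerProductSpace 𝕜 H₂]
    (K₁ : H₁ →L[𝕜] H₁) (K₂ : H₂ →L[𝕜] H₂) :
    WithLp 2 (H₁ × H₂) →L[𝕜] WithLp 2 (H₁ × H₂) :=
  ((WithLp.prodContinuousLinearEquiv 2 𝕜 H₁ H₂).symm.toContinuousLinearMap).comp
    ((K₁.prodMap K₂).comp (WithLp.prodContinuousLinearEquiv 2 𝕜 H₁ H₂).toContinuousLinearMap)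

/-- `F : Ω → H` is a continuous `K`-frame for `H` with bounds `A, B`. -/
def IsContKFrame {𝕜 : Type*} [RCLike 𝕜] [MeasurableSpace 𝕜] [BorelSpace 𝕜]
    {H : Type*} [NormedAddCommGroup H] [InnerProductSpace 𝕜 H] [CompleteSpace H]
    {Ω : Type*} [MeasurableSpace Ω] (μ : Measure Ω)
    (K : H →L[𝕜] H) (F : Ω → H) (A B : ℝ) : Prop :=
  ∀ u : H, Measurable (fun ω => (inner 𝕜 (F ω) u : 𝕜)) ∧
    A * ‖ContinuousLinearMap.adjoint K u‖ ^ 2 ≤ ∫ ω, ‖(inner 𝕜 (F ω) u : 𝕜)‖ ^ 2 ∂μ ∧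
    ∫ ω, ‖(inner 𝕜 (F ω) u : 𝕜)‖ ^ 2 ∂μ ≤ B * ‖u‖ ^ 2

open scoped InnerProductSpace ENNReal

theorem HilbertBasis.hasSum_norm_inner_sq {𝕜 ι E : Type*} [RCLike 𝕜] [NormedAddCommGroup E]
    [InnerProductSpace 𝕜 E] (b : HilbertBasis ι 𝕜 E) (x : E) :
    HasSum (fun i => ‖⟪b i, x⟫_𝕜‖ ^ 2) (‖x‖ ^ 2) := by
  simpa [b.repr_apply_apply] using lp.hasSum_norm (p := 2) (by norm_num) (b.repr x)

section Partition

variable {Ω ι : Type*} [MeasurableSpace Ω] [Countable ι] [MeasurableSpace ι]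

theorem exists_measurable_preimage_singleton_eq (s : ι → Set Ω)
    (hs : ∀ i, MeasurableSet (s i)) (hdisj : Pairwise (Function.onFun Disjoint s))
    (hcover : ⋃ i, s i = Set.univ) :
    ∃ idx : Ω → ι, Measurable idx ∧ ∀ i, idx ⁻¹' {i} = s i := by
  have hmem (ω : Ω) : ∃ i, ω ∈ s i := Set.mem_iUnion.1 (hcover ▸ Set.mem_univ ω)
  choose idx hidx using hmem
  have hpre (i : ι) : idx ⁻¹' {i} = s i := by
    ext ω
    refine ⟨fun h => h ▸ hidx ω, fun hω => ?_⟩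
    by_contra hne
    exact Set.disjoint_left.1 (hdisj hne) (hidx ω) hω
  exact ⟨idx, measurable_to_countable' fun i => hpre i ▸ hs i, hpre⟩

theorem lintegral_comp_countable [MeasurableSingletonClass ι] (μ : Measure Ω) {idx : Ω → ι}
    (hidx : Measurable idx) (f : ι → ℝ≥0∞) : ∫⁻ ω, f (idx ω) ∂μ = ∑' i, f i * μ (idx ⁻¹' {i}) := by
  rw [← lintegral_map (measurable_of_countable f) hidx, lintegral_countable']
  simp_rw [Measure.map_apply hidx (measurableSet_singleton _)]

end Partition

section ParsevalFrame

variable {𝕜 : Type*} [RCLike 𝕜] [MeasurableSpace 𝕜]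
  {H : Type*} [NormedAddCommGroup H] [InnerProductSpace 𝕜 H] [CompleteSpace H]
  {Ω : Type*} [MeasurableSpace Ω] {μ : Measure Ω}

def IsParsevalContKFrame (μ : Measure Ω) (K : H →L[𝕜] H) (F : Ω → H) : Prop :=
  ∀ u : H, Measurable (fun ω => ⟪F ω, u⟫_𝕜) ∧
    ∫ ω, ‖⟪F ω, u⟫_𝕜‖ ^ 2 ∂μ = ‖adjoint K u‖ ^ 2

theorem IsParsevalContKFrame.isContKFrame [BorelSpace 𝕜] {K : H →L[𝕜] H} {F : Ω → H}
    (hF : IsParsevalContKFrame μ K F) : IsContKFrame μ K F 1 (max 1 (‖K‖ ^ 2)) := by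
  intro u
  obtain ⟨hmeas, hint⟩ := hF u
  refine ⟨hmeas, by rw [hint, one_mul], ?_⟩
  calc ∫ ω, ‖⟪F ω, u⟫_𝕜‖ ^ 2 ∂μ = ‖adjoint K u‖ ^ 2 := hint
    _ ≤ (‖K‖ * ‖u‖) ^ 2 := by
      gcongr
      simpa only [LinearIsometryEquiv.norm_map] using (adjoint K).le_opNorm u
    _ ≤ max 1 (‖K‖ ^ 2) * ‖u‖ ^ 2 := by
      rw [mul_pow]
      gcongr
      exact le_max_right _ _

theorem IsParsevalContKFrame.exists_isContKFrame [BorelSpace 𝕜] {K : H →L[𝕜] H} {F : Ω → H}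
    (hF : IsParsevalContKFrame μ K F) :
    ∃ A B : ℝ, 0 < A ∧ A ≤ B ∧ IsContKFrame μ K F A B :=
  ⟨1, _, one_pos, le_max_left _ _, hF.isContKFrame⟩

theorem IsParsevalContKFrame.of_inner_eq
    {H' : Type*} [NormedAddCommGroup H'] [InnerProductSpace 𝕜 H'] [CompleteSpace H']
    {K : H →L[𝕜] H} {F : Ω → H} (hF : IsParsevalContKFrame μ K F)
    {K' : H' →L[𝕜] H'} {F' : Ω → H'}
    (h : ∀ v : H', ∃ u : H, (∀ ω, ⟪F' ω, v⟫_𝕜 = ⟪F ω, u⟫_𝕜) ∧ ‖adjoint K' v‖ = ‖adjoint K u‖) :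
    IsParsevalContKFrame μ K' F' := by
  intro v
  obtain ⟨u, hinner, hnorm⟩ := h v
  simp only [hinner, hnorm]
  exact hF u

end ParsevalFrame

section PartitionFrame

variable {𝕜 : Type*} [RCLike 𝕜]
  {H : Type*} [NormedAddCommGroup H] [InnerProductSpace 𝕜 H] [CompleteSpace H]
  {Ω ι : Type*} [MeasurableSpace Ω]

noncomputable def partitionFrame (μ : Measure Ω) (idx : Ω → ι) (b : HilbertBasis ι 𝕜 H)
    (T : H →L[𝕜] H) (ω : Ω) : H :=
  (((√(μ (idx ⁻¹' {idx ω})).toReal)⁻¹ : ℝ) : 𝕜) • T (b (idx ω))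

theorem norm_inner_partitionFrame_sq (μ : Measure Ω) (idx : Ω → ι) (b : HilbertBasis ι 𝕜 H)
    (T : H →L[𝕜] H) (u : H) (ω : Ω) :
    ‖⟪partitionFrame μ idx b T ω, u⟫_𝕜‖ ^ 2 =
      (μ (idx ⁻¹' {idx ω})).toReal⁻¹ * ‖⟪b (idx ω), adjoint T u⟫_𝕜‖ ^ 2 := by
  rw [partitionFrame, inner_smul_left, ← adjoint_inner_right, norm_mul, mul_pow,
    RCLike.norm_conj, RCLike.norm_ofReal, sq_abs, inv_pow, Real.sq_sqrt ENNReal.toReal_nonneg]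

theorem isParsevalContKFrame_partitionFrame [MeasurableSpace 𝕜] [Countable ι]
    [MeasurableSpace ι] [MeasurableSingletonClass ι] {μ : Measure Ω} {idx : Ω → ι}
    (hidx : Measurable idx) (hpos : ∀ i, 0 < μ (idx ⁻¹' {i}))
    (hfin : ∀ i, μ (idx ⁻¹' {i}) < ⊤) (b : HilbertBasis ι 𝕜 H) (T : H →L[𝕜] H) :
    IsParsevalContKFrame μ T (partitionFrame μ idx b T) := by
  intro u
  have hmeas : Measurable fun ω => ⟪partitionFrame μ idx b T ω, u⟫_𝕜 :=
    (measurable_of_countable fun i =>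
      ⟪(((√(μ (idx ⁻¹' {i})).toReal)⁻¹ : ℝ) : 𝕜) • T (b i), u⟫_𝕜).comp hidx
  refine ⟨hmeas, ?_⟩
  set g : ι → ℝ := fun i => (μ (idx ⁻¹' {i})).toReal⁻¹ * ‖⟪b i, adjoint T u⟫_𝕜‖ ^ 2
  have hweight (i : ι) :
      ENNReal.ofReal (g i) * μ (idx ⁻¹' {i}) = ENNReal.ofReal (‖⟪b i, adjoint T u⟫_𝕜‖ ^ 2) := by
    have hreal : 0 < (μ (idx ⁻¹' {i})).toReal := ENNReal.toReal_pos (hpos i).ne' (hfin i).ne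
    rw [← ENNReal.ofReal_toReal (hfin i).ne, ← ENNReal.ofReal_mul' ENNReal.toReal_nonneg]
    congr 1
    rw [mul_right_comm, inv_mul_cancel₀ hreal.ne', one_mul]
  have hparseval := b.hasSum_norm_inner_sq (adjoint T u)
  calc ∫ ω, ‖⟪partitionFrame μ idx b T ω, u⟫_𝕜‖ ^ 2 ∂μ = ∫ ω, g (idx ω) ∂μ := by
        simp_rw [norm_inner_partitionFrame_sq]; rfl
    _ = (∫⁻ ω, ENNReal.ofReal (g (idx ω)) ∂μ).toReal :=
        integral_eq_lintegral_of_nonneg_ae (ae_of_all _ fun ω => by positivity)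
          ((measurable_of_countable g).comp hidx).aestronglyMeasurable
    _ = (∑' i, ENNReal.ofReal (‖⟪b i, adjoint T u⟫_𝕜‖ ^ 2)).toReal := by
        rw [lintegral_comp_countable μ hidx (fun i => ENNReal.ofReal (g i)), tsum_congr hweight]
    _ = ‖adjoint T u‖ ^ 2 := by
        rw [← ENNReal.ofReal_tsum_of_nonneg (fun i => by positivity) hparseval.summable,
          hparseval.tsum_eq, ENNReal.toReal_ofReal (by positivity)]

end PartitionFrame

section ProdOp

variable {𝕜 : Type*} [RCLike 𝕜]
  {H₁ : Type*} [NormedAddCommGroup H₁] [InnerProductSpace 𝕜 H₁]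
  {H₂ : Type*} [NormedAddCommGroup H₂] [InnerProductSpace 𝕜 H₂]

theorem prodOp_toLp (K₁ : H₁ →L[𝕜] H₁) (K₂ : H₂ →L[𝕜] H₂) (x : H₁) (y : H₂) :
    prodOp K₁ K₂ (WithLp.toLp 2 (x, y)) = WithLp.toLp 2 (K₁ x, K₂ y) :=
  rfl

variable [CompleteSpace H₁] [CompleteSpace H₂]

theorem adjoint_prodOp (K₁ : H₁ →L[𝕜] H₁) (K₂ : H₂ →L[𝕜] H₂) :
    adjoint (prodOp K₁ K₂) = prodOp (adjoint K₁) (adjoint K₂) := by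
  refine ((eq_adjoint_iff _ _).2 fun x y => ?_).symm
  simp only [WithLp.prod_inner_apply]
  exact congrArg₂ (· + ·) (adjoint_inner_left K₁ _ _) (adjoint_inner_left K₂ _ _)

variable [MeasurableSpace 𝕜] {Ω : Type*} [MeasurableSpace Ω] {μ : Measure Ω}
  {K₁ : H₁ →L[𝕜] H₁} {K₂ : H₂ →L[𝕜] H₂} {G : Ω → WithLp 2 (H₁ × H₂)}

theorem IsParsevalContKFrame.fst (hG : IsParsevalContKFrame μ (prodOp K₁ K₂) G) :
    IsParsevalContKFrame μ K₁ fun ω => (G ω).fst :=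
  hG.of_inner_eq fun v => ⟨WithLp.toLp 2 (v, 0), fun ω => by simp [WithLp.prod_inner_apply],
    by simp [adjoint_prodOp, prodOp_toLp]⟩

theorem IsParsevalContKFrame.snd (hG : IsParsevalContKFrame μ (prodOp K₁ K₂) G) :
    IsParsevalContKFrame μ K₂ fun ω => (G ω).snd :=
  hG.of_inner_eq fun v => ⟨WithLp.toLp 2 (0, v), fun ω => by simp [WithLp.prod_inner_apply],
    by simp [adjoint_prodOp, prodOp_toLp]⟩

end ProdOp

/-- If `(Ω, μ)` admits a countable measurable partition with pieces of finite positive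
measure and `H₁ ⊕ H₂` has a Hilbert basis indexed by `ℕ`, then for any bounded operators
`K₁ ∈ B(H₁)`, `K₂ ∈ B(H₂)` there are maps `F₁ : Ω → H₁` and `F₂ : Ω → H₂` such that `F₁`
is a continuous `K₁`-frame, `F₂` is a continuous `K₂`-frame, and `F₁ ⊕ F₂` is a
continuous `(K₁ ⊕ K₂)`-frame, each with some positive bounds. -/
theorem exists_prod_K_frame
    {𝕜 : Type*} [RCLike 𝕜] [MeasurableSpace 𝕜] [BorelSpace 𝕜]
    {H₁ : Type*} [NormedAddCommGroup H₁] [InnerProductSpace 𝕜 H₁] [CompleteSpace H₁]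
    {H₂ : Type*} [NormedAddCommGroup H₂] [InnerProductSpace 𝕜 H₂] [CompleteSpace H₂]
    {Ω : Type*} [MeasurableSpace Ω] (μ : Measure Ω)
    (s : ℕ → Set Ω) (hsmeas : ∀ n, MeasurableSet (s n))
    (hdisj : Pairwise (Function.onFun Disjoint s))
    (hcover : (⋃ n, s n) = Set.univ)
    (hpos : ∀ n, 0 < μ (s n)) (hfin : ∀ n, μ (s n) < ⊤)
    (b : HilbertBasis ℕ 𝕜 (WithLp 2 (H₁ × H₂)))
    (K₁ : H₁ →L[𝕜] H₁) (K₂ : H₂ →L[𝕜] H₂) :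
    ∃ (F₁ : Ω → H₁) (F₂ : Ω → H₂),
      (∃ A B : ℝ, 0 < A ∧ A ≤ B ∧ IsContKFrame (𝕜 := 𝕜) μ K₁ F₁ A B) ∧
      (∃ A B : ℝ, 0 < A ∧ A ≤ B ∧ IsContKFrame (𝕜 := 𝕜) μ K₂ F₂ A B) ∧
      (∃ A B : ℝ, 0 < A ∧ A ≤ B ∧ IsContKFrame (𝕜 := 𝕜) μ (prodOp K₁ K₂)
        (fun ω => (WithLp.equiv 2 (H₁ × H₂)).symm (F₁ ω, F₂ ω)) A B) := by
  obtain ⟨idx, hidx, hpre⟩ := exists_measurable_preimage_singleton_eq s hsmeas hdisj hcover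
  have hG : IsParsevalContKFrame μ (prodOp K₁ K₂) (partitionFrame μ idx b (prodOp K₁ K₂)) :=
    isParsevalContKFrame_partitionFrame hidx (fun n => hpre n ▸ hpos n)
      (fun n => hpre n ▸ hfin n) b _
  exact ⟨_, _, hG.fst.exists_isContKFrame, hG.snd.exists_isContKFrame, hG.exists_isContKFrame⟩
end
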